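/- arXiv:1911.01065 — 4 statements merged into one kernel-verified Lean document; each statement's English description precedes it below -/
import Mathlib

section
/- Let G = (G_t)_{t∈ℤ} be an n-dimensional stationary-increment process with G_0 = 0, and suppose that E| log‖G_1‖ · 1_{{‖G_1‖>1}} |^{1+δ} < ∞ for some δ > 0. Then for every n×n symmetric positive definite matrix H, the partial sums Σ_{k=l}^0 e^{kH} Δ_k G converge almost surely (hence in probability) as l → −∞ to an almost surely finite random vector; in particular G ∈ 𝒢_H for every H > 0. -/
set_option autoImplicit false

open MeasureTheory Filter Finset Matrix Topology

variable {Ω : Type*}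

/-- Two `ℤ`-indexed `ℝⁿ`-valued processes have the same finite-dimensional
distributions. -/
def SameFDD {n : ℕ} [MeasurableSpace Ω] (μ : Measure Ω)
    (X Y : ℤ → Ω → (Fin n → ℝ)) : Prop :=
  ∀ (m : ℕ) (t : Fin m → ℤ),
    μ.map (fun ω (i : Fin m) => X (t i) ω) = μ.map (fun ω (i : Fin m) => Y (t i) ω)

/-- Strict stationarity of a `ℤ`-indexed process. -/
def IsStationaryProcess {n : ℕ} [MeasurableSpace Ω] (μ : Measure Ω)
    (X : ℤ → Ω → (Fin n → ℝ)) : Prop :=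
  ∀ s : ℤ, SameFDD μ (fun t => X (t + s)) X

/-- Stationarity of increments of a `ℤ`-indexed process. -/
def HasStationaryIncrements {n : ℕ} [MeasurableSpace Ω] (μ : Measure Ω)
    (G : ℤ → Ω → (Fin n → ℝ)) : Prop :=
  ∀ s : ℤ, SameFDD μ (fun t ω => G (t + s) ω - G s ω) (fun t ω => G t ω - G 0 ω)

/-- The matrix exponential `e^{tH}` for an integer `t`. -/
noncomputable def zexp {n : ℕ} (H : Matrix (Fin n) (Fin n) ℝ) (t : ℤ) :
    Matrix (Fin n) (Fin n) ℝ :=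
  NormedSpace.exp ((t : ℝ) • H)

/-- The partial sum `Σ_{k=l}^0 e^{kH} Δ_k G`. -/
noncomputable def partialSumG {n : ℕ} (H : Matrix (Fin n) (Fin n) ℝ)
    (G : ℤ → Ω → (Fin n → ℝ)) (l : ℤ) (ω : Ω) : Fin n → ℝ :=
  ∑ k ∈ Finset.Icc l 0, (zexp H k).mulVec (G k ω - G (k - 1) ω)

/-- `G ∈ 𝒢_H` : `G` is a stationary-increment process starting from `0` whose partial
sums `Σ_{k=l}^0 e^{kH} Δ_k G` converge in probability as `l → −∞`. -/
def MemG {n : ℕ} [MeasurableSpace Ω] (μ : Measure Ω) (H : Matrix (Fin n) (Fin n) ℝ)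
    (G : ℤ → Ω → (Fin n → ℝ)) : Prop :=
  (∀ ω, G 0 ω = 0) ∧ HasStationaryIncrements μ G ∧
    ∃ ξ : Ω → (Fin n → ℝ), TendstoInMeasure μ (fun l => partialSumG H G l) Filter.atBot ξ

/-- The Euclidean norm on `ℝⁿ`. -/
noncomputable def eucNorm {n : ℕ} (x : Fin n → ℝ) : ℝ :=
  Real.sqrt (∑ i, x i ^ 2)

/-!
Since `H > 0`, the operator norm `r = ‖e^{-H}‖` is `< 1`, so `‖e^{-mH} x‖ ≤ r^m ‖x‖`. Each
increment `Δ_{-m} G` has the law of `G₁`, and Markov's inequality for the log-moment gives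
`P(‖G₁‖ > t^m) ≤ C m^{-(1+δ)}`, which is summable in `m`. By Borel–Cantelli, almost surely
`‖Δ_{-m} G‖ ≤ t^m` for all large `m`; with `1 < t < 1/r` the series `Σ_m e^{-mH} Δ_{-m} G` is
then dominated by a geometric series, so it converges almost surely, hence in probability.
-/

section EuclideanNorm

variable {m n : ℕ}

lemma eucNorm_eq_norm_toLp (x : Fin n → ℝ) : eucNorm x = ‖WithLp.toLp 2 x‖ := by
  simp [eucNorm, EuclideanSpace.norm_eq]

lemma norm_le_eucNorm (x : Fin n → ℝ) : ‖x‖ ≤ eucNorm x := by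
  rw [eucNorm_eq_norm_toLp]
  exact (pi_norm_le_iff_of_nonneg (norm_nonneg _)).2 fun i =>
    PiLp.norm_apply_le (WithLp.toLp 2 x) i

lemma measurable_eucNorm : Measurable (eucNorm (n := n)) := by
  unfold eucNorm
  fun_prop

lemma summable_of_eventually_eucNorm_le_geometric {v : ℕ → Fin n → ℝ} {q : ℝ} (hq0 : 0 ≤ q)
    (hq1 : q < 1) (h : ∀ᶠ k in atTop, eucNorm (v k) ≤ q ^ k) : Summable v :=
  .of_norm_bounded_eventually (summable_geometric_of_lt_one hq0 hq1) <| by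
    rw [Nat.cofinite_eq_atTop]
    exact h.mono fun k hk => (norm_le_eucNorm _).trans hk

open scoped Matrix.Norms.L2Operator

lemma eucNorm_mulVec_le (A : Matrix (Fin m) (Fin n) ℝ) (x : Fin n → ℝ) :
    eucNorm (A *ᵥ x) ≤ ‖A‖ * eucNorm x := by
  rw [eucNorm_eq_norm_toLp, eucNorm_eq_norm_toLp]
  exact A.l2_opNorm_mulVec (WithLp.toLp 2 x)

lemma eucNorm_pow_mulVec_le (A : Matrix (Fin n) (Fin n) ℝ) (k : ℕ) (x : Fin n → ℝ) :
    eucNorm (A ^ k *ᵥ x) ≤ ‖A‖ ^ k * eucNorm x := by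
  induction k with
  | zero => simp
  | succ k ih =>
    calc eucNorm (A ^ (k + 1) *ᵥ x) = eucNorm (A *ᵥ (A ^ k *ᵥ x)) := by
          rw [pow_succ', mulVec_mulVec]
      _ ≤ ‖A‖ * (‖A‖ ^ k * eucNorm x) :=
          (eucNorm_mulVec_le _ _).trans (mul_le_mul_of_nonneg_left ih (norm_nonneg _))
      _ = ‖A‖ ^ (k + 1) * eucNorm x := by ring

end EuclideanNorm

theorem IsSelfAdjoint.norm_exp_neg_lt_one {A : Type*} [NormedRing A] [StarRing A]
    [NormedAlgebra ℝ A] [IsometricContinuousFunctionalCalculus ℝ A IsSelfAdjoint]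
    [ContinuousMap.UniqueHom ℝ A]
    {a : A} (ha : IsSelfAdjoint a) (hσ : ∀ x ∈ spectrum ℝ a, 0 < x) :
    ‖NormedSpace.exp (-a)‖ < 1 := by
  rw [← CFC.real_exp_eq_normedSpace_exp, ← cfc_comp_neg Real.exp a]
  refine norm_cfc_lt one_pos fun x hx => ?_
  simpa [abs_of_pos (Real.exp_pos _)] using hσ x hx

lemma zexp_neg_natCast {n : ℕ} (H : Matrix (Fin n) (Fin n) ℝ) (k : ℕ) :
    zexp H (-k) = NormedSpace.exp (-H) ^ k := by
  rw [zexp, ← Matrix.exp_nsmul, Int.cast_neg, Int.cast_natCast, neg_smul, ← smul_neg,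
    Nat.cast_smul_eq_nsmul]

open scoped Matrix.Norms.L2Operator MatrixOrder in
lemma Matrix.PosDef.exists_eucNorm_zexp_neg_mulVec_le {n : ℕ} {H : Matrix (Fin n) (Fin n) ℝ}
    (hH : H.PosDef) : ∃ r, 0 ≤ r ∧ r < 1 ∧
      ∀ (k : ℕ) (x : Fin n → ℝ), eucNorm (zexp H (-k) *ᵥ x) ≤ r ^ k * eucNorm x :=
  ⟨_, norm_nonneg _,
    hH.isHermitian.isSelfAdjoint.norm_exp_neg_lt_one fun _ hx =>
      hH.isStrictlyPositive.spectrum_pos hx,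
    fun k x => zexp_neg_natCast H k ▸ eucNorm_pow_mulVec_le _ k x⟩

section Probability

open ProbabilityTheory

variable {E : Type*} [MeasurableSpace Ω] {μ : Measure Ω}

lemma SameFDD.map_eq {n : ℕ} {X Y : ℤ → Ω → Fin n → ℝ} (h : SameFDD μ X Y)
    (hX : ∀ t, Measurable (X t)) (hY : ∀ t, Measurable (Y t)) (t : ℤ) :
    μ.map (X t) = μ.map (Y t) := by
  have hev : Measurable fun f : Fin 1 → Fin n → ℝ => f 0 := measurable_pi_apply 0
  have h1 := congrArg (Measure.map fun f : Fin 1 → Fin n → ℝ => f 0) (h 1 fun _ => t)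
  rwa [Measure.map_map hev (measurable_pi_lambda _ fun _ => hX t),
    Measure.map_map hev (measurable_pi_lambda _ fun _ => hY t)] at h1

lemma HasStationaryIncrements.identDistrib_increment {n : ℕ} {G : ℤ → Ω → Fin n → ℝ}
    (hsi : HasStationaryIncrements μ G) (hmeas : ∀ t, Measurable (G t)) (hG0 : ∀ ω, G 0 ω = 0)
    (k : ℤ) : IdentDistrib (fun ω => G k ω - G (k - 1) ω) (G 1) μ μ where
  aemeasurable_fst := ((hmeas k).sub (hmeas (k - 1))).aemeasurable
  aemeasurable_snd := (hmeas 1).aemeasurable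
  map_eq := by
    have h := (hsi (k - 1)).map_eq (fun t => (hmeas _).sub (hmeas _))
      (fun t => (hmeas t).sub (hmeas 0)) 1
    simpa only [add_sub_cancel, hG0, sub_zero] using h

variable {N : E → ℝ} {Y : Ω → E} {p : ℝ}

lemma measure_lt_le_integral_log_rpow_div [IsFiniteMeasure μ] (hp : 0 ≤ p)
    (hint : Integrable (fun ω => {x | 1 < N x}.indicator (fun x => |Real.log (N x)| ^ p) (Y ω)) μ)
    {s : ℝ} (hs : 1 < s) :
    μ {ω | s < N (Y ω)} ≤ ENNReal.ofReal
      ((∫ ω, {x | 1 < N x}.indicator (fun x => |Real.log (N x)| ^ p) (Y ω) ∂μ) /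
        Real.log s ^ p) := by
  set W := fun ω => {x | 1 < N x}.indicator (fun x => |Real.log (N x)| ^ p) (Y ω)
  have hW : 0 ≤ W := fun ω => Set.indicator_nonneg (fun _ _ => by positivity) _
  have hsub : {ω | s < N (Y ω)} ⊆ {ω | Real.log s ^ p ≤ W ω} := by
    intro ω (hω : s < N (Y ω))
    have hlog : Real.log s ≤ |Real.log (N (Y ω))| :=
      (Real.log_le_log (by linarith) hω.le).trans (le_abs_self _)
    have hmem : Y ω ∈ {x | 1 < N x} := show 1 < N (Y ω) by linarith
    show Real.log s ^ p ≤ W ω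
    simp only [W, Set.indicator_of_mem hmem]
    exact Real.rpow_le_rpow (Real.log_nonneg hs.le) hlog hp
  have hmarkov := mul_meas_ge_le_integral_of_nonneg (.of_forall hW) hint (Real.log s ^ p)
  calc μ {ω | s < N (Y ω)} ≤ μ {ω | Real.log s ^ p ≤ W ω} := measure_mono hsub
    _ = ENNReal.ofReal (μ.real {ω | Real.log s ^ p ≤ W ω}) :=
      (ofReal_measureReal (measure_ne_top _ _)).symm
    _ ≤ _ := ENNReal.ofReal_le_ofReal <| by
      rwa [le_div_iff₀' (Real.rpow_pos_of_pos (Real.log_pos hs) p)]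

lemma ae_eventually_le_pow_of_identDistrib [IsFiniteMeasure μ] [MeasurableSpace E]
    (hN : Measurable N) {Z : ℕ → Ω → E} (hZ : ∀ k, IdentDistrib (Z k) Y μ μ) (hp : 1 < p)
    (hint : Integrable (fun ω => {x | 1 < N x}.indicator (fun x => |Real.log (N x)| ^ p) (Y ω)) μ)
    {t : ℝ} (ht : 1 < t) : ∀ᵐ ω ∂μ, ∀ᶠ k in atTop, N (Z k ω) ≤ t ^ k := by
  set I := ∫ ω, {x | 1 < N x}.indicator (fun x => |Real.log (N x)| ^ p) (Y ω) ∂μ with hI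
  have hI0 : 0 ≤ I := integral_nonneg fun ω => Set.indicator_nonneg (fun _ _ => by positivity) _
  have hlogt := Real.log_pos ht
  -- Markov says nothing at `k = 0` (where `log (t ^ 0) = 0`), so it is applied to the tail.
  have htail : ∀ k : ℕ, μ {ω | t ^ (k + 1) < N (Y ω)} ≤
      ENNReal.ofReal (I / Real.log t ^ p * (1 / ((k : ℝ) + 1) ^ p)) := by
    intro k
    refine (measure_lt_le_integral_log_rpow_div (by linarith) hint
      (one_lt_pow₀ ht k.succ_ne_zero)).trans_eq ?_
    rw [Real.log_pow, Real.mul_rpow (by positivity) hlogt.le, hI]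
    push_cast
    congr 1
    ring
  have hsummable : Summable fun k : ℕ => I / Real.log t ^ p * (1 / ((k : ℝ) + 1) ^ p) := by
    refine Summable.mul_left _ ?_
    exact_mod_cast (summable_nat_add_iff 1).2 (Real.summable_one_div_nat_rpow.2 hp)
  have hfinite : ∑' k, μ {ω | t ^ k < N (Z k ω)} ≠ ⊤ := by
    have hlaw : ∀ k, μ {ω | t ^ k < N (Z k ω)} = μ {ω | t ^ k < N (Y ω)} := fun k =>
      (hZ k).measure_mem_eq (s := {x | t ^ k < N x}) (measurableSet_lt measurable_const hN)
    have htail_sum : ∑' k : ℕ, μ {ω | t ^ (k + 1) < N (Y ω)} ≠ ⊤ :=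
      ne_top_of_le_ne_top ENNReal.ofReal_ne_top <| (ENNReal.tsum_le_tsum htail).trans_eq
        (ENNReal.ofReal_tsum_of_nonneg (fun k => by positivity) hsummable).symm
    simp_rw [hlaw]
    exact fun htop => htail_sum (ENNReal.tsum_add_one_eq_top htop (measure_ne_top _ _))
  filter_upwards [ae_eventually_notMem hfinite] with ω hω
  simpa using hω

end Probability

section Convergence

variable {n : ℕ}

lemma Filter.Tendsto.of_comp_neg_natCast {X : Type*} {u : ℤ → X} {l : Filter X}
    (h : Tendsto (fun k : ℕ => u (-k)) atTop l) : Tendsto u atBot l := by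
  have htoNat : Tendsto (fun j : ℤ => (-j).toNat) atBot atTop :=
    tendsto_atTop.2 fun b => eventually_atBot.2 ⟨-b, fun j hj => by omega⟩
  refine (h.comp htoNat).congr' ?_
  filter_upwards [eventually_le_atBot 0] with j hj
  simp only [Function.comp_apply, Int.toNat_of_nonneg (neg_nonneg.2 hj), neg_neg]

lemma partialSumG_neg_natCast (H : Matrix (Fin n) (Fin n) ℝ) (G : ℤ → Ω → Fin n → ℝ)
    (N : ℕ) (ω : Ω) :
    partialSumG H G (-N) ω =
      ∑ k ∈ range (N + 1), zexp H (-k) *ᵥ (G (-k) ω - G (-k - 1) ω) := by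
  refine Finset.sum_nbij' (fun j => (-j).toNat) (fun k => -(k : ℤ)) ?_ ?_ ?_ ?_ ?_ <;>
    intro j hj <;> simp only [mem_Icc, mem_range] at hj ⊢ <;> try omega
  rw [Int.toNat_of_nonneg (by omega), neg_neg]

lemma measurable_partialSumG [MeasurableSpace Ω] (H : Matrix (Fin n) (Fin n) ℝ)
    {G : ℤ → Ω → Fin n → ℝ} (hmeas : ∀ t, Measurable (G t)) (l : ℤ) :
    Measurable (partialSumG H G l) := by
  unfold partialSumG
  fun_prop

end Convergence

/-- if `G` is an `n`-dimensional stationary-increment process with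
`G₀ = 0` whose increment `G₁` has a finite logarithmic moment of order `1 + δ`,
then for every symmetric positive definite matrix `H` the partial sums
`Σ_{k=l}^0 e^{kH} Δ_k G` converge almost surely (hence in probability) as
`l → −∞` to an (almost surely finite) random vector; in particular `G ∈ 𝒢_H`. -/
theorem stmt0 {n : ℕ} [MeasurableSpace Ω] (μ : Measure Ω) [IsProbabilityMeasure μ]
    (G : ℤ → Ω → (Fin n → ℝ)) (hmeas : ∀ t, Measurable (G t))
    (hsi : HasStationaryIncrements μ G) (hG0 : ∀ ω, G 0 ω = 0)
    (δ : ℝ) (hδ : 0 < δ)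
    (hlog : Integrable (fun ω =>
      Set.indicator {x : Fin n → ℝ | 1 < eucNorm x}
        (fun x => |Real.log (eucNorm x)| ^ (1 + δ)) (G 1 ω)) μ)
    (H : Matrix (Fin n) (Fin n) ℝ) (hH : H.PosDef) :
    (∃ ξ : Ω → (Fin n → ℝ),
        (∀ᵐ ω ∂μ, Tendsto (fun l => partialSumG H G l ω) Filter.atBot (𝓝 (ξ ω))) ∧
        TendstoInMeasure μ (fun l => partialSumG H G l) Filter.atBot ξ) ∧
      MemG μ H G := by
  obtain ⟨r, hr0, hr1, hdecay⟩ := hH.exists_eucNorm_zexp_neg_mulVec_le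
  obtain ⟨q, hrq, hq1⟩ := exists_between hr1
  have hq0 : 0 < q := hr0.trans_lt hrq
  set v : ℕ → Ω → Fin n → ℝ := fun k ω => zexp H (-k) *ᵥ (G (-k) ω - G (-k - 1) ω)
  have hgrowth := ae_eventually_le_pow_of_identDistrib measurable_eucNorm
    (fun k => hsi.identDistrib_increment hmeas hG0 (-k)) (by linarith) hlog
    ((one_lt_inv₀ hq0).2 hq1)
  have hsummable : ∀ᵐ ω ∂μ, Summable fun k => v k ω := by
    filter_upwards [hgrowth] with ω hω
    refine summable_of_eventually_eucNorm_le_geometric (div_nonneg hr0 hq0.le)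
      ((div_lt_one hq0).2 hrq) (hω.mono fun k hk => ?_)
    calc eucNorm (v k ω) ≤ r ^ k * eucNorm (G (-k) ω - G (-k - 1) ω) := hdecay k _
      _ ≤ r ^ k * q⁻¹ ^ k := by gcongr
      _ = (r / q) ^ k := by rw [← mul_pow, div_eq_mul_inv]
  set ξ : Ω → Fin n → ℝ := fun ω => ∑' k, v k ω
  have hae : ∀ᵐ ω ∂μ, Tendsto (fun N : ℕ => partialSumG H G (-N) ω) atTop (𝓝 (ξ ω)) := by
    filter_upwards [hsummable] with ω hω
    simp_rw [partialSumG_neg_natCast]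
    exact hω.hasSum.tendsto_sum_nat.comp (tendsto_add_atTop_nat 1)
  have hprob : TendstoInMeasure μ (fun l => partialSumG H G l) atBot ξ := by
    have hmeasN (N : ℕ) : AEStronglyMeasurable (partialSumG H G (-N)) μ :=
      (measurable_partialSumG H hmeas _).aestronglyMeasurable
    exact fun ε hε => (tendstoInMeasure_of_tendsto_ae hmeasN hae ε hε).of_comp_neg_natCast
  exact ⟨⟨ξ, hae.mono fun ω hω => hω.of_comp_neg_natCast, hprob⟩, hG0, hsi, ξ, hprob⟩
end

section
/- Let H be an n×n symmetric positive definite matrix and let X = (X_t)_{t∈ℤ} be an n-dimensional process such that e^{tH} X_t → 0 in probability as t → −∞ and such that Δ_t X = (e^{−H} − I) X_{t−1} + Δ_t G for all t ∈ ℤ, where G ∈ 𝒢_H and Δ_t X = X_t − X_{t−1}, Δ_t G = G_t − G_{t−1}. Then X is strictly stationary. -/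
set_option autoImplicit false

open MeasureTheory Filter Finset Matrix Topology

variable {Ω : Type*}

/-! Unrolling the recursion gives `e^{uH} X_u = e^{(l-1)H} X_{l-1} + Σ_{k=l}^u e^{kH} Δ_k G`, so
`X_u` is the limit in probability, as `l → -∞`, of `Y_l(u) = e^{-uH} Σ_{k=l}^u e^{kH} Δ_k G`
(`truncatedSolution`). Finitely many `Y_l(u)` form a fixed continuous function of finitely many
increments of `G`, so shifting `l` and all the times `u` by `s` does not change their joint law.
Equality of laws passes to limits in probability. -/

open scoped NNReal ENNReal

namespace MeasureTheory

variable {α ι E F : Type*} {mα : MeasurableSpace α} {μ : Measure α} {l : Filter ι}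

lemma TendstoInMeasure.comp_lipschitzWith [PseudoEMetricSpace E] [PseudoEMetricSpace F]
    {f : ι → α → E} {g : α → E} {φ : E → F} {K : ℝ≥0} (hφ : LipschitzWith K φ)
    (h : TendstoInMeasure μ f l g) :
    TendstoInMeasure μ (fun i ω => φ (f i ω)) l (fun ω => φ (g ω)) := by
  intro ε hε
  refine tendsto_of_tendsto_of_tendsto_of_le_of_le tendsto_const_nhds
    (h (ε / K) (ENNReal.div_pos hε.ne' ENNReal.coe_ne_top)) (fun _ => zero_le)
    fun i => measure_mono fun ω hω => ?_
  exact ENNReal.div_le_of_le_mul (mul_comm (K : ℝ≥0∞) _ ▸ hω.trans (hφ _ _))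

lemma tendstoInMeasure_of_sub [SeminormedAddCommGroup E] {f : ι → α → E} {g : α → E}
    (h : TendstoInMeasure μ (fun i ω => f i ω - g ω) l 0) : TendstoInMeasure μ f l g := by
  rw [tendstoInMeasure_iff_norm] at h ⊢
  simpa using h

lemma map_eq_of_tendstoInMeasure [IsProbabilityMeasure μ] [l.NeBot] [l.IsCountablyGenerated]
    [PseudoEMetricSpace E] [MeasurableSpace E] [BorelSpace E] {f g : ι → α → E} {F G : α → E}
    (hf : ∀ i, AEMeasurable (f i) μ) (hg : ∀ i, AEMeasurable (g i) μ)
    (hlaw : ∀ i, μ.map (f i) = μ.map (g i))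
    (hfF : TendstoInMeasure μ f l F) (hgG : TendstoInMeasure μ g l G) :
    μ.map F = μ.map G := by
  have hF := hfF.tendstoInDistribution hf
  refine tendstoInDistribution_unique g ⟨hg, hF.aemeasurable_limit, ?_⟩
    (hgG.tendstoInDistribution hg)
  simpa only [hlaw] using hF.tendsto

end MeasureTheory

lemma SameFDD.map_eq_of_dependsOn {n : ℕ} [MeasurableSpace Ω] {μ : Measure Ω}
    {Y Z : ℤ → Ω → (Fin n → ℝ)} (h : SameFDD μ Y Z) (hY : ∀ t, Measurable (Y t))
    (hZ : ∀ t, Measurable (Z t)) {β : Type*} [TopologicalSpace β] [MeasurableSpace β]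
    [BorelSpace β] {F : (ℤ → Fin n → ℝ) → β} (hF : Continuous F) {S : Finset ℤ}
    (hFS : DependsOn F S) :
    μ.map (fun ω => F (fun k => Y k ω)) = μ.map (fun ω => F (fun k => Z k ω)) := by
  let extend (v : Fin S.card → Fin n → ℝ) (k : ℤ) : Fin n → ℝ :=
    if hk : k ∈ S then v (S.equivFin ⟨k, hk⟩) else 0
  have hextend : Continuous extend := continuous_pi fun k => by
    by_cases hk : k ∈ S <;> simp only [extend, hk, dite_true, dite_false] <;> fun_prop
  have hfactor (W : ℤ → Ω → (Fin n → ℝ)) : (fun ω => F (fun k => W k ω)) =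
      (F ∘ extend) ∘ fun ω (i : Fin S.card) => W (S.equivFin.symm i) ω :=
    funext fun ω => hFS fun k hk => by simp [extend, Finset.mem_coe.1 hk]
  rw [hfactor Y, hfactor Z,
    ← Measure.map_map (hF.comp hextend).measurable (measurable_pi_lambda _ fun i => hY _),
    ← Measure.map_map (hF.comp hextend).measurable (measurable_pi_lambda _ fun i => hZ _),
    h _ fun i => S.equivFin.symm i]

section MatrixExponential

variable {n : ℕ} (H : Matrix (Fin n) (Fin n) ℝ)

lemma zexp_add (a b : ℤ) : zexp H (a + b) = zexp H a * zexp H b := by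
  rw [zexp, Int.cast_add, add_smul]
  exact Matrix.exp_add_of_commute _ _ (((Commute.refl H).smul_left _).smul_right _)

lemma zexp_neg_one : zexp H (-1) = NormedSpace.exp (-H) := by
  simp [zexp]

lemma zexp_neg_mulVec_zexp_mulVec (u : ℤ) (v : Fin n → ℝ) :
    zexp H (-u) *ᵥ (zexp H u *ᵥ v) = v := by
  rw [mulVec_mulVec, ← zexp_add, neg_add_cancel, zexp, Int.cast_zero, zero_smul,
    NormedSpace.exp_zero, one_mulVec]

variable {H}

lemma zexp_mulVec_eq_add_sum {x d : ℤ → Fin n → ℝ}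
    (hx : ∀ t, x t = NormedSpace.exp (-H) *ᵥ x (t - 1) + d t) {l u : ℤ} (hlu : l - 1 ≤ u) :
    zexp H u *ᵥ x u = zexp H (l - 1) *ᵥ x (l - 1) + ∑ k ∈ Icc l u, zexp H k *ᵥ d k := by
  induction u, hlu using Int.leInduction with
  | base => simp
  | succ u hu ih =>
    rw [← insert_Icc_right_eq_Icc_add_one (by omega), sum_insert (by simp), hx (u + 1),
      add_sub_cancel_right, mulVec_add, mulVec_mulVec, ← zexp_neg_one, ← zexp_add,
      add_neg_cancel_right, ih]
    abel

end MatrixExponential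

section TruncatedSolution

variable {n : ℕ} {H : Matrix (Fin n) (Fin n) ℝ}

variable (H) in
noncomputable def truncatedSolution (d : ℤ → Fin n → ℝ) (l u : ℤ) : Fin n → ℝ :=
  zexp H (-u) *ᵥ ∑ k ∈ Icc l u, zexp H k *ᵥ d k

lemma continuous_truncatedSolution (l u : ℤ) :
    Continuous fun d : ℤ → Fin n → ℝ => truncatedSolution H d l u := by
  unfold truncatedSolution
  fun_prop

lemma truncatedSolution_sub_eq {x d : ℤ → Fin n → ℝ}
    (hx : ∀ t, x t = NormedSpace.exp (-H) *ᵥ x (t - 1) + d t) {l u : ℤ} (hlu : l - 1 ≤ u) :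
    truncatedSolution H d l u - x u = -(zexp H (-u) *ᵥ (zexp H (l - 1) *ᵥ x (l - 1))) := by
  rw [truncatedSolution, ← zexp_neg_mulVec_zexp_mulVec H u (x u), zexp_mulVec_eq_add_sum hx hlu,
    mulVec_add]
  abel

lemma truncatedSolution_add_add (d : ℤ → Fin n → ℝ) (l u s : ℤ) :
    truncatedSolution H d (l + s) (u + s) = truncatedSolution H (fun k => d (k + s)) l u := by
  have hshift : ∀ k, zexp H (k + s) *ᵥ d (k + s) = zexp H s *ᵥ (zexp H k *ᵥ d (k + s)) := by
    intro k
    rw [mulVec_mulVec, ← zexp_add, add_comm]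
  rw [truncatedSolution, truncatedSolution, ← map_add_right_Icc, sum_map]
  simp only [addRightEmbedding_apply, hshift]
  rw [← mulVec_sum, mulVec_mulVec, ← zexp_add, neg_add, neg_add_cancel_right]

lemma truncatedSolution_congr {d d' : ℤ → Fin n → ℝ} {l u : ℤ}
    (h : ∀ k ∈ Icc l u, d k = d' k) : truncatedSolution H d l u = truncatedSolution H d' l u := by
  rw [truncatedSolution, truncatedSolution, sum_congr rfl fun k hk => by rw [h k hk]]

end TruncatedSolution

def increments {n : ℕ} (G : ℤ → Ω → (Fin n → ℝ)) (ω : Ω) (k : ℤ) : Fin n → ℝ :=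
  G k ω - G (k - 1) ω

section Stationarity

variable {n m : ℕ} {H : Matrix (Fin n) (Fin n) ℝ} [MeasurableSpace Ω] {μ : Measure Ω}

lemma map_truncatedSolution_add_add {G : ℤ → Ω → (Fin n → ℝ)} (hG : HasStationaryIncrements μ G)
    (hmG : ∀ t, Measurable (G t)) (t : Fin m → ℤ) (l s : ℤ) :
    μ.map (fun ω i => truncatedSolution H (increments G ω) (l + s) (t i + s)) =
      μ.map (fun ω i => truncatedSolution H (increments G ω) l (t i)) := by
  let F (x : ℤ → Fin n → ℝ) (i : Fin m) : Fin n → ℝ :=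
    truncatedSolution H (fun k => x k - x (k - 1)) l (t i)
  have hF : Continuous F :=
    continuous_pi fun i => (continuous_truncatedSolution _ _).comp (by fun_prop)
  have hFS : DependsOn F (univ.biUnion fun i => Icc (l - 1) (t i) : Finset ℤ) := by
    intro x y hxy
    funext i
    refine truncatedSolution_congr fun k hk => ?_
    have hmem : ∀ j, l - 1 ≤ j → j ≤ t i → j ∈ (univ.biUnion fun i => Icc (l - 1) (t i)) :=
      fun j h₁ h₂ => mem_biUnion.2 ⟨i, mem_univ i, mem_Icc.2 ⟨h₁, h₂⟩⟩
    rw [mem_Icc] at hk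
    rw [hxy k (hmem k (by omega) hk.2), hxy (k - 1) (hmem (k - 1) (by omega) (by omega))]
  have hshift : (fun ω i => truncatedSolution H (increments G ω) (l + s) (t i + s)) =
      fun ω => F fun k => G (k + s) ω - G s ω := by
    funext ω i
    simp only [F, truncatedSolution_add_add, increments, sub_sub_sub_cancel_right,
      sub_add_eq_add_sub]
  have hbase : (fun ω i => truncatedSolution H (increments G ω) l (t i)) =
      fun ω => F fun k => G k ω - G 0 ω := by
    funext ω i
    simp only [F, sub_sub_sub_cancel_right]
    rfl
  rw [hshift, hbase]
  exact (hG s).map_eq_of_dependsOn (fun _ => (hmG _).sub (hmG s)) (fun _ => (hmG _).sub (hmG 0))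
    hF hFS

lemma tendstoInMeasure_truncatedSolution {X G : ℤ → Ω → (Fin n → ℝ)}
    (hX : ∀ t ω, X t ω = NormedSpace.exp (-H) *ᵥ X (t - 1) ω + increments G ω t)
    (hlim : TendstoInMeasure μ (fun t ω => zexp H t *ᵥ X t ω) atBot fun _ => 0) (t : Fin m → ℤ) :
    TendstoInMeasure μ (fun l ω i => truncatedSolution H (increments G ω) l (t i)) atBot
      (fun ω i => X (t i) ω) := by
  let L : (Fin n → ℝ) →L[ℝ] Fin m → Fin n → ℝ :=
    LinearMap.toContinuousLinearMap (LinearMap.pi fun i => -mulVecLin (zexp H (-t i)))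
  have hlim' : TendstoInMeasure μ (fun l ω => zexp H (l - 1) *ᵥ X (l - 1) ω) atBot 0 :=
    hlim.comp (tendsto_atBot_add_const_right _ (-1) tendsto_id)
  refine tendstoInMeasure_of_sub ((hlim'.comp_lipschitzWith L.lipschitz).congr' ?_ ?_)
  · filter_upwards [eventually_all.2 fun i => eventually_le_atBot (t i)] with l hl
    refine ae_of_all _ fun ω => funext fun i => ?_
    simp [L, truncatedSolution_sub_eq (fun t => hX t ω) (show l - 1 ≤ t i by linarith [hl i])]
  · exact ae_of_all _ fun ω => map_zero L

end Stationarity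

theorem stmt4_general {n : ℕ} [MeasurableSpace Ω] (μ : Measure Ω) [IsProbabilityMeasure μ]
    (H : Matrix (Fin n) (Fin n) ℝ)
    (X G : ℤ → Ω → (Fin n → ℝ))
    (hmG : ∀ t, Measurable (G t))
    (hG : MemG μ H G)
    (hlim : TendstoInMeasure μ (fun t ω => (zexp H t).mulVec (X t ω)) Filter.atBot
      (fun _ => (0 : Fin n → ℝ)))
    (heq : ∀ (t : ℤ) (ω : Ω), X t ω - X (t - 1) ω =
      (NormedSpace.exp (-H) - 1).mulVec (X (t - 1) ω) + (G t ω - G (t - 1) ω)) :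
    IsStationaryProcess μ X := by
  obtain ⟨-, hGinc, -⟩ := hG
  have hX (t : ℤ) (ω : Ω) : X t ω = NormedSpace.exp (-H) *ᵥ X (t - 1) ω + increments G ω t := by
    have hΔ := heq t ω
    rw [sub_mulVec, one_mulVec] at hΔ
    rw [increments]
    linear_combination (norm := module) hΔ
  have hmY {m : ℕ} (l : ℤ) (u : Fin m → ℤ) :
      AEMeasurable (fun ω i => truncatedSolution H (increments G ω) l (u i)) μ :=
    (measurable_pi_lambda _ fun i => (continuous_truncatedSolution l (u i)).measurable.comp
      (measurable_pi_lambda _ fun k => (hmG k).sub (hmG (k - 1)))).aemeasurable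
  intro s m t
  exact map_eq_of_tendstoInMeasure (fun _ => hmY _ _) (fun _ => hmY _ _)
    (fun l => map_truncatedSolution_add_add hGinc hmG t l s)
    ((tendstoInMeasure_truncatedSolution hX hlim _).comp
      (tendsto_atBot_add_const_right _ s tendsto_id))
    (tendstoInMeasure_truncatedSolution hX hlim t)

/-- if `e^{tH} X_t → 0` in probability as `t → −∞` and
`Δ_t X = (e^{−H} − I) X_{t−1} + Δ_t G` for all `t ∈ ℤ` with `G ∈ 𝒢_H`,
then `X` is strictly stationary. -/
theorem stmt4 {n : ℕ} [MeasurableSpace Ω] (μ : Measure Ω) [IsProbabilityMeasure μ]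
    (H : Matrix (Fin n) (Fin n) ℝ) (hH : H.PosDef)
    (X G : ℤ → Ω → (Fin n → ℝ))
    (hmX : ∀ t, Measurable (X t)) (hmG : ∀ t, Measurable (G t))
    (hG : MemG μ H G)
    (hlim : TendstoInMeasure μ (fun t ω => (zexp H t).mulVec (X t ω)) Filter.atBot
      (fun _ => (0 : Fin n → ℝ)))
    (heq : ∀ (t : ℤ) (ω : Ω), X t ω - X (t - 1) ω =
      (NormedSpace.exp (-H) - 1).mulVec (X (t - 1) ω) + (G t ω - G (t - 1) ω)) :
    IsStationaryProcess μ X :=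
  stmt4_general μ H X G hmG hG hlim heq
end

section
/- Let H be an n×n symmetric positive definite matrix and set Θ = I − e^{−H}. Let X = (X_t)_{t∈ℤ} be a centred, square-integrable strictly stationary n-dimensional process satisfying Δ_t X = −Θ X_{t−1} + Δ_t G for all t ∈ ℤ, where G_0 = 0. With γ(t) = E[X_t X_0ᵀ], v(t) = E[G_t G_tᵀ], B_t = Σ_{k=1}^t (γ(k−1) − γ(k)ᵀ), C_t = Σ_{k=1}^t Σ_{j=1}^t γ(k−j), and D_t = v(t) − 2γ(0) + γ(t) + γ(t)ᵀ, the continuous-time algebraic Riccati equation B_tᵀ Θ + Θ B_t − Θ C_t Θ + D_t = 0 holds for every t ∈ ℕ. -/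
set_option autoImplicit false

open MeasureTheory Filter Finset Matrix Topology

variable {Ω : Type*}

/-! Writing `S = Σ_{k=1}^t X_{k−1}`, the equation telescopes to `G_t = (X_t − X_0) + Θ S`.
Expanding the second moment of `G_t` bilinearly, `v(t)` splits into `E[(X_t − X_0)(X_t − X_0)ᵀ]`,
which cancels the terms of `D_t` in `γ(0)` and `γ(t)`, and the blocks `E[S (X_t − X_0)ᵀ] = −B_t`
and `E[S Sᵀ] = C_t`; the last two identities come from stationarity, `E[X_a X_bᵀ] = γ(a − b)`,
and `γ(−k) = γ(k)ᵀ`. Since `Θ` is symmetric, the Riccati expression then vanishes identically. -/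

section CrossMoment

variable [MeasurableSpace Ω] {μ : Measure Ω} {n : ℕ}

noncomputable def crossMoment (μ : Measure Ω) (u w : Ω → Fin n → ℝ) :
    Matrix (Fin n) (Fin n) ℝ :=
  Matrix.of fun i j => ∫ ω, u ω i * w ω j ∂μ

lemma crossMoment_transpose (u w : Ω → Fin n → ℝ) :
    (crossMoment μ u w)ᵀ = crossMoment μ w u := by
  ext i j
  simp only [crossMoment, transpose_apply, of_apply, mul_comm]

lemma MeasureTheory.MemLp.integrable_eval_mul_eval {u w : Ω → Fin n → ℝ} (hu : MemLp u 2 μ)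
    (hw : MemLp w 2 μ) (i j : Fin n) : Integrable (fun ω => u ω i * w ω j) μ :=
  (hu.eval i).integrable_mul (hw.eval j)

lemma MeasureTheory.MemLp.mulVec {u : Ω → Fin n → ℝ} (hu : MemLp u 2 μ)
    (A : Matrix (Fin n) (Fin n) ℝ) : MemLp (fun ω => A *ᵥ u ω) 2 μ :=
  (LinearMap.toContinuousLinearMap (Matrix.mulVecLin A)).comp_memLp' hu

variable {u u' w w' : Ω → Fin n → ℝ}

lemma crossMoment_add_left (hu : MemLp u 2 μ) (hu' : MemLp u' 2 μ) (hw : MemLp w 2 μ) :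
    crossMoment μ (u + u') w = crossMoment μ u w + crossMoment μ u' w := by
  ext i j
  simp only [crossMoment, Matrix.add_apply, of_apply, Pi.add_apply, add_mul]
  exact integral_add (hu.integrable_eval_mul_eval hw i j) (hu'.integrable_eval_mul_eval hw i j)

lemma crossMoment_sub_left (hu : MemLp u 2 μ) (hu' : MemLp u' 2 μ) (hw : MemLp w 2 μ) :
    crossMoment μ (u - u') w = crossMoment μ u w - crossMoment μ u' w := by
  ext i j
  simp only [crossMoment, Matrix.sub_apply, of_apply, Pi.sub_apply, sub_mul]
  exact integral_sub (hu.integrable_eval_mul_eval hw i j) (hu'.integrable_eval_mul_eval hw i j)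

lemma crossMoment_sum_left {ι : Type*} {s : Finset ι} {u : ι → Ω → Fin n → ℝ}
    (hu : ∀ k ∈ s, MemLp (u k) 2 μ) (hw : MemLp w 2 μ) :
    crossMoment μ (∑ k ∈ s, u k) w = ∑ k ∈ s, crossMoment μ (u k) w := by
  ext i j
  simp only [crossMoment, of_apply, Finset.sum_apply, Finset.sum_mul, Matrix.sum_apply]
  exact integral_finsetSum s fun k hk => (hu k hk).integrable_eval_mul_eval hw i j

lemma crossMoment_mulVec_left (hu : MemLp u 2 μ) (hw : MemLp w 2 μ)
    (A : Matrix (Fin n) (Fin n) ℝ) :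
    crossMoment μ (fun ω => A *ᵥ u ω) w = A * crossMoment μ u w := by
  ext i j
  simp only [crossMoment, of_apply, mul_apply, mulVec, dotProduct, Finset.sum_mul, mul_assoc]
  rw [integral_finsetSum _ fun m _ => (hu.integrable_eval_mul_eval hw m j).const_mul (A i m)]
  simp only [integral_const_mul]

lemma crossMoment_add_right (hu : MemLp u 2 μ) (hw : MemLp w 2 μ) (hw' : MemLp w' 2 μ) :
    crossMoment μ u (w + w') = crossMoment μ u w + crossMoment μ u w' := by
  rw [← crossMoment_transpose, crossMoment_add_left hw hw' hu, transpose_add,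
    crossMoment_transpose, crossMoment_transpose]

lemma crossMoment_sub_right (hu : MemLp u 2 μ) (hw : MemLp w 2 μ) (hw' : MemLp w' 2 μ) :
    crossMoment μ u (w - w') = crossMoment μ u w - crossMoment μ u w' := by
  rw [← crossMoment_transpose, crossMoment_sub_left hw hw' hu, transpose_sub,
    crossMoment_transpose, crossMoment_transpose]

lemma crossMoment_sum_right {ι : Type*} {s : Finset ι} {w : ι → Ω → Fin n → ℝ}
    (hu : MemLp u 2 μ) (hw : ∀ k ∈ s, MemLp (w k) 2 μ) :
    crossMoment μ u (∑ k ∈ s, w k) = ∑ k ∈ s, crossMoment μ u (w k) := by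
  rw [← crossMoment_transpose, crossMoment_sum_left hw hu, transpose_sum]
  simp only [crossMoment_transpose]

lemma crossMoment_mulVec_right (hu : MemLp u 2 μ) (hw : MemLp w 2 μ)
    (A : Matrix (Fin n) (Fin n) ℝ) :
    crossMoment μ u (fun ω => A *ᵥ w ω) = crossMoment μ u w * Aᵀ := by
  rw [← crossMoment_transpose, crossMoment_mulVec_left hw hu, transpose_mul,
    crossMoment_transpose]

lemma crossMoment_add_mulVec_self (hu : MemLp u 2 μ) (hw : MemLp w 2 μ)
    (A : Matrix (Fin n) (Fin n) ℝ) :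
    crossMoment μ (fun ω => u ω + A *ᵥ w ω) (fun ω => u ω + A *ᵥ w ω) =
      crossMoment μ u u + (crossMoment μ w u)ᵀ * Aᵀ + A * crossMoment μ w u +
        A * crossMoment μ w w * Aᵀ := by
  have hAw := hw.mulVec A
  change crossMoment μ (u + fun ω => A *ᵥ w ω) (u + fun ω => A *ᵥ w ω) = _
  rw [crossMoment_add_left hu hAw (hu.add hAw), crossMoment_add_right hu hu hAw,
    crossMoment_add_right hAw hu hAw, crossMoment_mulVec_right hu hw,
    crossMoment_mulVec_left hw hu, crossMoment_mulVec_left hw hAw,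
    crossMoment_mulVec_right hw hw, crossMoment_transpose]
  noncomm_ring

end CrossMoment

section Stationary

variable [MeasurableSpace Ω] {μ : Measure Ω} {n : ℕ} {X : ℤ → Ω → Fin n → ℝ}

noncomputable def autocov (μ : Measure Ω) (X : ℤ → Ω → Fin n → ℝ) (t : ℤ) :
    Matrix (Fin n) (Fin n) ℝ :=
  crossMoment μ (X t) (X 0)

lemma IsStationaryProcess.crossMoment_add (hX : IsStationaryProcess μ X)
    (hXm : ∀ t, AEMeasurable (X t) μ) (a b s : ℤ) :
    crossMoment μ (X (a + s)) (X (b + s)) = crossMoment μ (X a) (X b) := by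
  ext i j
  have hφ : Measurable fun y : Fin 2 → Fin n → ℝ => y 0 i * y 1 j := by fun_prop
  have hmap : ∀ c : Fin 2 → ℤ, AEMeasurable (fun ω k => X (c k) ω) μ :=
    fun c => aemeasurable_pi_lambda _ fun k => hXm _
  calc ∫ ω, X (a + s) ω i * X (b + s) ω j ∂μ
      = ∫ y, y 0 i * y 1 j ∂(μ.map fun ω (k : Fin 2) => X (![a, b] k + s) ω) := by
        rw [integral_map (hmap _) hφ.aestronglyMeasurable]
        simp
    _ = ∫ y, y 0 i * y 1 j ∂(μ.map fun ω (k : Fin 2) => X (![a, b] k) ω) :=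
        congrArg (fun ν => ∫ y, y 0 i * y 1 j ∂ν) (hX s 2 ![a, b])
    _ = ∫ ω, X a ω i * X b ω j ∂μ := by
        rw [integral_map (hmap _) hφ.aestronglyMeasurable]
        simp

variable (hX : IsStationaryProcess μ X) (hX2 : ∀ t, MemLp (X t) 2 μ)
include hX hX2

lemma IsStationaryProcess.crossMoment_eq_autocov (a b : ℤ) :
    crossMoment μ (X a) (X b) = autocov μ X (a - b) := by
  have h := hX.crossMoment_add (fun t => (hX2 t).aestronglyMeasurable.aemeasurable) (a - b) 0 b
  rw [zero_add, sub_add_cancel] at h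
  rw [autocov, h]

lemma IsStationaryProcess.autocov_neg (k : ℤ) : autocov μ X (-k) = (autocov μ X k)ᵀ := by
  change _ = (crossMoment μ (X k) (X 0))ᵀ
  rw [crossMoment_transpose, hX.crossMoment_eq_autocov hX2, zero_sub]

lemma IsStationaryProcess.crossMoment_sub_zero_self (t : ℤ) :
    crossMoment μ (X t - X 0) (X t - X 0) =
      (2 : ℝ) • autocov μ X 0 - autocov μ X t - (autocov μ X t)ᵀ := by
  rw [crossMoment_sub_left (hX2 t) (hX2 0) ((hX2 t).sub (hX2 0)),
    crossMoment_sub_right (hX2 t) (hX2 t) (hX2 0), crossMoment_sub_right (hX2 0) (hX2 t) (hX2 0)]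
  simp only [hX.crossMoment_eq_autocov hX2, sub_self, sub_zero, zero_sub,
    hX.autocov_neg hX2, two_smul]
  abel

lemma IsStationaryProcess.crossMoment_sum_self (t : ℤ) :
    crossMoment μ (∑ k ∈ Icc 1 t, X (k - 1)) (∑ k ∈ Icc 1 t, X (k - 1)) =
      ∑ k ∈ Icc 1 t, ∑ j ∈ Icc 1 t, autocov μ X (k - j) := by
  rw [crossMoment_sum_left (fun k _ => hX2 _) (memLp_finsetSum' _ fun k _ => hX2 _)]
  refine Finset.sum_congr rfl fun k _ => ?_
  rw [crossMoment_sum_right (hX2 _) fun j _ => hX2 _]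
  simp only [hX.crossMoment_eq_autocov hX2, sub_sub_sub_cancel_right]

lemma IsStationaryProcess.crossMoment_sum_sub_zero (t : ℤ) :
    crossMoment μ (∑ k ∈ Icc 1 t, X (k - 1)) (X t - X 0) =
      -∑ k ∈ Icc 1 t, (autocov μ X (k - 1) - (autocov μ X k)ᵀ) := by
  have hreflect : ∑ k ∈ Icc 1 t, autocov μ X (k - 1 - t) = ∑ k ∈ Icc 1 t, autocov μ X (-k) :=
    Finset.sum_nbij' (fun k => t + 1 - k) (fun k => t + 1 - k)
      (fun k hk => by simp only [Finset.mem_Icc] at hk ⊢; omega)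
      (fun k hk => by simp only [Finset.mem_Icc] at hk ⊢; omega)
      (fun k _ => by ring) (fun k _ => by ring) (fun k _ => by ring_nf)
  rw [crossMoment_sub_right (memLp_finsetSum' _ fun k _ => hX2 _) (hX2 t) (hX2 0),
    crossMoment_sum_left (fun k _ => hX2 _) (hX2 t),
    crossMoment_sum_left (fun k _ => hX2 _) (hX2 0)]
  simp only [hX.crossMoment_eq_autocov hX2, sub_zero, hreflect, hX.autocov_neg hX2,
    Finset.sum_sub_distrib]
  abel

end Stationary

lemma Matrix.eq_sub_add_mulVec_sum_of_sub_eq {n : ℕ} {Θ : Matrix (Fin n) (Fin n) ℝ}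
    {x g : ℤ → Fin n → ℝ} (hg0 : g 0 = 0)
    (h : ∀ t, x t - x (t - 1) = -(Θ *ᵥ x (t - 1)) + (g t - g (t - 1))) (m : ℕ) :
    g m = x m - x 0 + Θ *ᵥ ∑ k ∈ Icc (1 : ℤ) m, x (k - 1) := by
  induction m with
  | zero => simp [hg0]
  | succ m ih =>
    have hstep := h (m + 1)
    rw [add_sub_cancel_right] at hstep
    rw [Nat.cast_succ, ← insert_Icc_right_eq_Icc_add_one (by omega),
      sum_insert (by simp), add_sub_cancel_right, mulVec_add]
    linear_combination (norm := module) ih - hstep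

theorem stmt10_general {n : ℕ} [MeasurableSpace Ω] (μ : Measure Ω)
    (H : Matrix (Fin n) (Fin n) ℝ) (hH : H.PosDef)
    (Θ : Matrix (Fin n) (Fin n) ℝ)
    (hΘ : Θ = (1 : Matrix (Fin n) (Fin n) ℝ) - NormedSpace.exp (-H))
    (X G : ℤ → Ω → (Fin n → ℝ))
    (hX : IsStationaryProcess μ X)
    (hL2X : ∀ (t : ℤ) (i : Fin n), MemLp (fun ω => X t ω i) 2 μ)
    (hG0 : ∀ ω, G 0 ω = 0)
    (heq : ∀ (t : ℤ) (ω : Ω), X t ω - X (t - 1) ω =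
      -Θ.mulVec (X (t - 1) ω) + (G t ω - G (t - 1) ω))
    (γ v : ℤ → Matrix (Fin n) (Fin n) ℝ)
    (hγ : ∀ t : ℤ, γ t = Matrix.of fun i j => ∫ ω, X t ω i * X 0 ω j ∂μ)
    (hv : ∀ t : ℤ, v t = Matrix.of fun i j => ∫ ω, G t ω i * G t ω j ∂μ)
    (B C D : ℕ → Matrix (Fin n) (Fin n) ℝ)
    (hB : ∀ t : ℕ, B t = ∑ k ∈ Finset.Icc (1 : ℤ) t, (γ (k - 1) - (γ k)ᵀ))
    (hC : ∀ t : ℕ, C t = ∑ k ∈ Finset.Icc (1 : ℤ) t, ∑ j ∈ Finset.Icc (1 : ℤ) t, γ (k - j))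
    (hD : ∀ t : ℕ, D t = v t - (2 : ℝ) • γ 0 + γ t + (γ t)ᵀ) :
    ∀ t : ℕ, (B t)ᵀ * Θ + Θ * B t - Θ * C t * Θ + D t = 0 := by
  intro t
  obtain rfl : γ = autocov μ X := funext hγ
  have hX2 : ∀ s, MemLp (X s) 2 μ := fun s => memLp_pi_iff.2 (hL2X s)
  have hΘT : Θᵀ = Θ := by
    rw [hΘ, transpose_sub, transpose_one, ← exp_transpose, transpose_neg,
      ← conjTranspose_eq_transpose_of_trivial, hH.isHermitian.eq]
  set S := ∑ k ∈ Icc (1 : ℤ) t, X (k - 1)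
  have hG : G t = fun ω => (X t - X 0) ω + Θ *ᵥ S ω := funext fun ω => by
    simpa [S, Finset.sum_apply] using
      eq_sub_add_mulVec_sum_of_sub_eq (hG0 ω) (fun s => heq s ω) t
  have hvt : v t = crossMoment μ (G t) (G t) := hv t
  rw [hB, hC, hD, hvt, hG, crossMoment_add_mulVec_self ((hX2 t).sub (hX2 0))
    (memLp_finsetSum' _ fun k _ => hX2 _), hX.crossMoment_sub_zero_self hX2,
    hX.crossMoment_sum_self hX2, hX.crossMoment_sum_sub_zero hX2, hΘT, transpose_neg]
  noncomm_ring

/-- for a centred square-integrable strictly stationary `X`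
satisfying `Δ_t X = −Θ X_{t−1} + Δ_t G` with `Θ = I − e^{−H}` and `G_0 = 0`, the
matrices `B_t = Σ_{k=1}^t (γ(k−1) − γ(k)ᵀ)`, `C_t = Σ_{k=1}^t Σ_{j=1}^t γ(k−j)`
and `D_t = v(t) − 2γ(0) + γ(t) + γ(t)ᵀ` satisfy the algebraic Riccati equation
`B_tᵀ Θ + Θ B_t − Θ C_t Θ + D_t = 0` for every `t ∈ ℕ`. -/
theorem stmt10 {n : ℕ} [MeasurableSpace Ω] (μ : Measure Ω) [IsProbabilityMeasure μ]
    (H : Matrix (Fin n) (Fin n) ℝ) (hH : H.PosDef)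
    (Θ : Matrix (Fin n) (Fin n) ℝ)
    (hΘ : Θ = (1 : Matrix (Fin n) (Fin n) ℝ) - NormedSpace.exp (-H))
    (X G : ℤ → Ω → (Fin n → ℝ))
    (hmX : ∀ t, Measurable (X t))
    (hX : IsStationaryProcess μ X)
    (hcent : ∀ (t : ℤ) (i : Fin n), ∫ ω, X t ω i ∂μ = 0)
    (hL2X : ∀ (t : ℤ) (i : Fin n), MemLp (fun ω => X t ω i) 2 μ)
    (hG0 : ∀ ω, G 0 ω = 0)
    (heq : ∀ (t : ℤ) (ω : Ω), X t ω - X (t - 1) ω =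
      -Θ.mulVec (X (t - 1) ω) + (G t ω - G (t - 1) ω))
    (γ v : ℤ → Matrix (Fin n) (Fin n) ℝ)
    (hγ : ∀ t : ℤ, γ t = Matrix.of fun i j => ∫ ω, X t ω i * X 0 ω j ∂μ)
    (hv : ∀ t : ℤ, v t = Matrix.of fun i j => ∫ ω, G t ω i * G t ω j ∂μ)
    (B C D : ℕ → Matrix (Fin n) (Fin n) ℝ)
    (hB : ∀ t : ℕ, B t = ∑ k ∈ Finset.Icc (1 : ℤ) t, (γ (k - 1) - (γ k)ᵀ))
    (hC : ∀ t : ℕ, C t = ∑ k ∈ Finset.Icc (1 : ℤ) t, ∑ j ∈ Finset.Icc (1 : ℤ) t, γ (k - j))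
    (hD : ∀ t : ℕ, D t = v t - (2 : ℝ) • γ 0 + γ t + (γ t)ᵀ) :
    ∀ t : ℕ, (B t)ᵀ * Θ + Θ * B t - Θ * C t * Θ + D t = 0 :=
  stmt10_general μ H hH Θ hΘ X G hX hL2X hG0 heq γ v hγ hv B C D hB hC hD
end

section
/- Let H > 0 be a real number and let X = (X_t)_{t∈ℝ} be a centred, square-integrable one-dimensional strictly stationary process with continuous paths almost surely and autocovariance γ(t) = E[X_t X_0]. Define G_t = X_t − X_0 + H ∫_0^t X_s ds, and for δ > 0 set r_δ(t) = E[(G_t − G_{t−δ})(G_0 − G_{−δ})]. Then for every t ∈ ℝ and δ > 0: r_δ(t) = 2γ(t) − γ(t+δ) − γ(t−δ) + H² (∫_{t−δ}^t (s−t+δ) γ(s) ds + ∫_t^{t+δ} (t−s+δ) γ(s) ds); in particular the first-order terms in H vanish in the univariate case. -/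
set_option autoImplicit false

open MeasureTheory Filter Topology

variable {Ω : Type*}

/-- Equality of finite-dimensional distributions for one-dimensional
`ℝ`-indexed processes. -/
def SameFDDR1 [MeasurableSpace Ω] (μ : Measure Ω) (X Y : ℝ → Ω → ℝ) : Prop :=
  ∀ (m : ℕ) (t : Fin m → ℝ),
    μ.map (fun ω (i : Fin m) => X (t i) ω) = μ.map (fun ω (i : Fin m) => Y (t i) ω)

/-- Strict stationarity of a one-dimensional `ℝ`-indexed process. -/
def IsStationaryR1 [MeasurableSpace Ω] (μ : Measure Ω) (X : ℝ → Ω → ℝ) : Prop :=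
  ∀ s : ℝ, SameFDDR1 μ (fun t => X (t + s)) X

/-!
Write `G_t - G_{t-δ} = A + H B` and `G_0 - G_{-δ} = C + H D`, where `A`, `C` are increments of `X`
and `B`, `D` are integrals of `X` over windows of length `δ`. On a modification of `X` with
everywhere continuous paths, Fubini's theorem (justified by the constant second moment `γ 0`)
turns each term of `E[(A + H B)(C + H D)]` into an integral of `γ`. The term `E[AC]` is the
second difference of `γ`; the first-order terms `E[BC]` and `E[DA]` are
`∓∫_{t-δ}^t (γ(s+δ) - γ s) ds` and cancel because `γ` is even; and `E[BD] = ∫∫ γ(s - u) du ds`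
is the integral of `γ` against a tent of width `2δ`, obtained by integrating by parts against a
primitive of `γ`.
-/

open Function

theorem intervalIntegral.integral_sub_mul_eq {g : ℝ → ℝ} {a b c : ℝ}
    (hg : IntervalIntegrable g volume a b) (hc : c ∈ Set.uIcc a b) (p : ℝ) :
    ∫ x in a..b, (x - p) * g x =
      (b - p) * (∫ y in c..b, g y) - (a - p) * (∫ y in c..a, g y)
        - ∫ x in a..b, ∫ y in c..x, g y := by
  have hF := hg.absolutelyContinuousOnInterval_intervalIntegral hc
  have hw : AbsolutelyContinuousOnInterval (fun x : ℝ => x - p) a b :=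
    (contDiff_id.sub contDiff_const).contDiffOn.absolutelyContinuousOnInterval
  have hderiv : ∫ x in a..b, (x - p) * g x =
      ∫ x in a..b, (x - p) * deriv (fun x => ∫ y in c..x, g y) x := by
    refine intervalIntegral.integral_congr_ae ?_
    filter_upwards [hg.ae_hasDerivAt_integral] with x hx hxab
    rw [(hx (Set.uIoc_subset_uIcc hxab) c hc).deriv]
  rw [hderiv, hw.integral_mul_deriv_eq_deriv_mul hF]
  simp

theorem intervalIntegral.integral_integral_comp_sub_eq_tent {g : ℝ → ℝ}
    (hg : ∀ a b, IntervalIntegrable g volume a b) (t δ : ℝ) :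
    ∫ s in (t - δ)..t, ∫ u in (-δ)..0, g (s - u) =
      (∫ v in (t - δ)..t, (v - t + δ) * g v) + ∫ v in t..(t + δ), (t - v + δ) * g v := by
  set F : ℝ → ℝ := fun x => ∫ y in t..x, g y
  have hFc : Continuous F := intervalIntegral.continuous_primitive hg t
  have hleft : ∫ v in (t - δ)..t, (v - t + δ) * g v = -∫ x in (t - δ)..t, F x := by
    simp_rw [show ∀ v, v - t + δ = v - (t - δ) by intro v; ring]
    rw [integral_sub_mul_eq (hg _ _) Set.right_mem_uIcc]
    simp [F]
  have hright : ∫ v in t..(t + δ), (t - v + δ) * g v = ∫ x in t..(t + δ), F x := by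
    simp_rw [show ∀ v, t - v + δ = -(v - (t + δ)) by intro v; ring, neg_mul,
      intervalIntegral.integral_neg]
    rw [integral_sub_mul_eq (hg _ _) Set.left_mem_uIcc]
    simp [F]
  have hshift : IntervalIntegrable (fun s => F (s + δ)) volume (t - δ) t :=
    (hFc.comp (continuous_add_const δ)).intervalIntegrable _ _
  calc ∫ s in (t - δ)..t, ∫ u in (-δ)..0, g (s - u)
      = ∫ s in (t - δ)..t, (F (s + δ) - F s) := by
        refine intervalIntegral.integral_congr fun s _ => ?_
        rw [intervalIntegral.integral_comp_sub_left g, sub_zero, sub_neg_eq_add,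
          intervalIntegral.integral_interval_sub_left (hg _ _) (hg _ _)]
    _ = (∫ x in t..(t + δ), F x) - ∫ x in (t - δ)..t, F x := by
        rw [intervalIntegral.integral_sub hshift (hFc.intervalIntegrable _ _),
          intervalIntegral.integral_comp_add_right F δ, sub_add_cancel]
    _ = _ := by rw [hleft, hright]; ring

section SquareIntegrable

variable [MeasurableSpace Ω] {μ : Measure Ω}

theorem exists_continuous_modification {T E : Type*} [TopologicalSpace T] [TopologicalSpace E]
    [MeasurableSpace E] [Zero E] {X : T → Ω → E} (hXm : ∀ t, Measurable (X t))
    (hpaths : ∀ᵐ ω ∂μ, Continuous fun t => X t ω) :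
    ∃ Y : T → Ω → E, (∀ t, Measurable (Y t)) ∧ (∀ ω, Continuous fun t => Y t ω) ∧
      ∀ᵐ ω ∂μ, ∀ t, Y t ω = X t ω := by
  classical
  set S := toMeasurable μ {ω | ¬Continuous fun t => X t ω}
  have hS : μ S = 0 := by rw [measure_toMeasurable]; exact ae_iff.1 hpaths
  refine ⟨fun t ω => if ω ∈ S then 0 else X t ω,
    fun t => Measurable.ite (measurableSet_toMeasurable _ _) measurable_const (hXm t),
    fun ω => ?_, (measure_eq_zero_iff_ae_notMem.1 hS).mono fun ω hω t => if_neg hω⟩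
  by_cases hω : ω ∈ S
  · simp only [hω, if_true]
    exact continuous_const
  · simp only [hω, if_false]
    exact not_not.1 fun h => hω (subset_toMeasurable _ _ h)

theorem integral_abs_mul_le_of_memLp_two {f g : Ω → ℝ} (hf : MemLp f 2 μ) (hg : MemLp g 2 μ) :
    ∫ ω, |f ω * g ω| ∂μ ≤ ((∫ ω, f ω ^ 2 ∂μ) + ∫ ω, g ω ^ 2 ∂μ) / 2 := by
  rw [← integral_add hf.integrable_sq hg.integrable_sq, ← integral_div]
  refine integral_mono (hf.integrable_mul hg).abs
    ((hf.integrable_sq.add hg.integrable_sq).div_const 2) fun ω => ?_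
  rw [abs_mul]
  nlinarith [sq_abs (f ω), sq_abs (g ω), sq_nonneg (|f ω| - |g ω|)]

theorem integrable_prod_mul_of_integral_sq_le {ι : Type*} [MeasurableSpace ι] {ρ : Measure ι}
    [IsFiniteMeasure ρ] [SFinite μ] {f g : ι → Ω → ℝ}
    (hf : StronglyMeasurable (uncurry f)) (hg : StronglyMeasurable (uncurry g))
    (hf₂ : ∀ i, MemLp (f i) 2 μ) (hg₂ : ∀ i, MemLp (g i) 2 μ) {C D : ℝ}
    (hC : ∀ i, ∫ ω, f i ω ^ 2 ∂μ ≤ C) (hD : ∀ i, ∫ ω, g i ω ^ 2 ∂μ ≤ D) :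
    Integrable (fun p : ι × Ω => f p.1 p.2 * g p.1 p.2) (ρ.prod μ) := by
  have hm : StronglyMeasurable fun p : ι × Ω => f p.1 p.2 * g p.1 p.2 := hf.mul hg
  refine (integrable_prod_iff hm.aestronglyMeasurable).2
    ⟨.of_forall fun i => (hf₂ i).integrable_mul (hg₂ i), ?_⟩
  refine Integrable.of_bound hm.norm.integral_prod_right'.aestronglyMeasurable ((C + D) / 2)
    (.of_forall fun i => ?_)
  rw [Real.norm_of_nonneg (integral_nonneg fun _ => norm_nonneg _)]
  simp only [Real.norm_eq_abs]
  exact (integral_abs_mul_le_of_memLp_two (hf₂ i) (hg₂ i)).trans (by linarith [hC i, hD i])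

section Fubini

variable {ι : Type*} [MeasurableSpace ι] {ρ ν : Measure ι} [IsFiniteMeasure ρ]
  [IsFiniteMeasure ν] [SFinite μ] {Y : ι → Ω → ℝ} {Z : Ω → ℝ} {C : ℝ}

theorem integrable_integral_mul_of_integral_sq_le (hY : StronglyMeasurable (uncurry Y))
    (hY₂ : ∀ i, MemLp (Y i) 2 μ) (hC : ∀ i, ∫ ω, Y i ω ^ 2 ∂μ ≤ C) (hZ : StronglyMeasurable Z)
    (hZ₂ : MemLp Z 2 μ) :
    Integrable (fun ω => (∫ i, Y i ω ∂ρ) * Z ω) μ := by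
  simp_rw [← integral_mul_const]
  exact (integrable_prod_mul_of_integral_sq_le (ρ := ρ) (g := fun _ => Z) hY
    (hZ.comp_measurable measurable_snd) hY₂ (fun _ => hZ₂) hC fun _ => le_rfl).integral_prod_right

theorem integral_integral_mul_of_integral_sq_le (hY : StronglyMeasurable (uncurry Y))
    (hY₂ : ∀ i, MemLp (Y i) 2 μ) (hC : ∀ i, ∫ ω, Y i ω ^ 2 ∂μ ≤ C) (hZ : StronglyMeasurable Z)
    (hZ₂ : MemLp Z 2 μ) :
    ∫ ω, (∫ i, Y i ω ∂ρ) * Z ω ∂μ = ∫ i, ∫ ω, Y i ω * Z ω ∂μ ∂ρ := by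
  simp_rw [← integral_mul_const]
  exact integral_integral_swap (f := fun ω i => Y i ω * Z ω)
    (integrable_prod_mul_of_integral_sq_le (ρ := ρ) (g := fun _ => Z) hY
      (hZ.comp_measurable measurable_snd) hY₂ (fun _ => hZ₂) hC fun _ => le_rfl).swap

theorem integrable_integral_mul_integral_of_integral_sq_le (hY : StronglyMeasurable (uncurry Y))
    (hY₂ : ∀ i, MemLp (Y i) 2 μ) (hC : ∀ i, ∫ ω, Y i ω ^ 2 ∂μ ≤ C) :
    Integrable (fun ω => (∫ i, Y i ω ∂ρ) * ∫ j, Y j ω ∂ν) μ := by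
  simp_rw [← integral_prod_mul]
  exact (integrable_prod_mul_of_integral_sq_le (ρ := ρ.prod ν) (f := fun p => Y p.1)
    (g := fun p => Y p.2) (hY.comp_measurable (measurable_fst.fst.prodMk measurable_snd))
    (hY.comp_measurable (measurable_fst.snd.prodMk measurable_snd))
    (fun p => hY₂ p.1) (fun p => hY₂ p.2) (fun p => hC p.1) fun p => hC p.2).integral_prod_right

theorem integral_integral_mul_integral_of_integral_sq_le (hY : StronglyMeasurable (uncurry Y))
    (hY₂ : ∀ i, MemLp (Y i) 2 μ) (hC : ∀ i, ∫ ω, Y i ω ^ 2 ∂μ ≤ C) :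
    ∫ ω, (∫ i, Y i ω ∂ρ) * (∫ j, Y j ω ∂ν) ∂μ = ∫ i, ∫ j, ∫ ω, Y i ω * Y j ω ∂μ ∂ν ∂ρ := by
  have hint := integrable_prod_mul_of_integral_sq_le (ρ := ρ.prod ν) (f := fun p => Y p.1)
    (g := fun p => Y p.2) (hY.comp_measurable (measurable_fst.fst.prodMk measurable_snd))
    (hY.comp_measurable (measurable_fst.snd.prodMk measurable_snd))
    (fun p => hY₂ p.1) (fun p => hY₂ p.2) (fun p => hC p.1) fun p => hC p.2
  simp_rw [← integral_prod_mul]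
  rw [integral_integral_swap (f := fun ω (p : ι × ι) => Y p.1 ω * Y p.2 ω) hint.swap,
    integral_prod _ hint.integral_prod_left]

end Fubini

theorem integral_add_mul_add {A B C D : Ω → ℝ} (H : ℝ)
    (hAC : Integrable (fun ω => A ω * C ω) μ) (hBC : Integrable (fun ω => B ω * C ω) μ)
    (hDA : Integrable (fun ω => D ω * A ω) μ) (hBD : Integrable (fun ω => B ω * D ω) μ) :
    ∫ ω, (A ω + H * B ω) * (C ω + H * D ω) ∂μ =
      (∫ ω, A ω * C ω ∂μ) + H * ((∫ ω, B ω * C ω ∂μ) + ∫ ω, D ω * A ω ∂μ)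
        + H ^ 2 * ∫ ω, B ω * D ω ∂μ := by
  have hexp : ∀ ω, (A ω + H * B ω) * (C ω + H * D ω) =
      A ω * C ω + H * (B ω * C ω + D ω * A ω) + H ^ 2 * (B ω * D ω) := fun ω => by ring
  have hlin : Integrable (fun ω => H * (B ω * C ω + D ω * A ω)) μ := (hBC.add hDA).const_mul H
  have hsum : Integrable (fun ω => A ω * C ω + H * (B ω * C ω + D ω * A ω)) μ := hAC.add hlin
  simp_rw [hexp]
  rw [integral_add hsum (hBD.const_mul _), integral_add hAC hlin, integral_const_mul,
    integral_const_mul, integral_add hBC hDA]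

end SquareIntegrable

section Autocovariance

variable [MeasurableSpace Ω] {μ : Measure Ω}

def HasAutocovariance (μ : Measure Ω) (Y : ℝ → Ω → ℝ) (γ : ℝ → ℝ) : Prop :=
  ∀ a b, ∫ ω, Y a ω * Y b ω ∂μ = γ (a - b)

theorem IsStationaryR1.integral_mul_eq {X : ℝ → Ω → ℝ} (hX : IsStationaryR1 μ X)
    (hXm : ∀ t, Measurable (X t)) (a b : ℝ) :
    ∫ ω, X a ω * X b ω ∂μ = ∫ ω, X (a - b) ω * X 0 ω ∂μ := by
  have hmul : Measurable fun v : Fin 2 → ℝ => v 0 * v 1 :=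
    (measurable_pi_apply 0).mul (measurable_pi_apply 1)
  have key := congrArg (fun ν => ∫ v, v 0 * v 1 ∂ν) (hX b 2 ![a - b, 0])
  simp only at key
  rw [integral_map (measurable_pi_lambda _ fun i => hXm _).aemeasurable
      hmul.aestronglyMeasurable,
    integral_map (measurable_pi_lambda _ fun i => hXm _).aemeasurable
      hmul.aestronglyMeasurable] at key
  simpa using key

theorem IsStationaryR1.hasAutocovariance {X : ℝ → Ω → ℝ} (hX : IsStationaryR1 μ X)
    (hXm : ∀ t, Measurable (X t)) {γ : ℝ → ℝ} (hγ : ∀ t, γ t = ∫ ω, X t ω * X 0 ω ∂μ) :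
    HasAutocovariance μ X γ := fun a b => by rw [hX.integral_mul_eq hXm, hγ]

namespace HasAutocovariance

variable {Y : ℝ → Ω → ℝ} {γ : ℝ → ℝ}

theorem congr_ae {X : ℝ → Ω → ℝ} (h : HasAutocovariance μ X γ) (hXY : ∀ t, Y t =ᵐ[μ] X t) :
    HasAutocovariance μ Y γ := fun a b => by
  rw [← h a b]
  exact integral_congr_ae ((hXY a).mul (hXY b))

theorem comm (h : HasAutocovariance μ Y γ) (a b : ℝ) : γ (a - b) = γ (b - a) := by
  rw [← h, ← h]
  simp_rw [mul_comm]

theorem integral_sq (h : HasAutocovariance μ Y γ) (s : ℝ) : ∫ ω, Y s ω ^ 2 ∂μ = γ 0 := by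
  simpa [sq] using h s s

theorem abs_le (h : HasAutocovariance μ Y γ) (hY₂ : ∀ s, MemLp (Y s) 2 μ) (x : ℝ) :
    |γ x| ≤ γ 0 :=
  calc |γ x| = |∫ ω, Y x ω * Y 0 ω ∂μ| := by rw [h, sub_zero]
    _ ≤ ∫ ω, |Y x ω * Y 0 ω| ∂μ := abs_integral_le_integral_abs
    _ ≤ ((∫ ω, Y x ω ^ 2 ∂μ) + ∫ ω, Y 0 ω ^ 2 ∂μ) / 2 :=
        integral_abs_mul_le_of_memLp_two (hY₂ x) (hY₂ 0)
    _ = γ 0 := by rw [h.integral_sq, h.integral_sq]; ring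

theorem measurable [SFinite μ] (h : HasAutocovariance μ Y γ)
    (hY : StronglyMeasurable (uncurry Y)) : Measurable γ := by
  have hγ : γ = fun x => ∫ ω, Y x ω * Y 0 ω ∂μ := funext fun x => by rw [h, sub_zero]
  rw [hγ]
  exact (hY.mul (hY.comp_measurable (measurable_const.prodMk measurable_snd))
    ).integral_prod_right'.measurable

theorem intervalIntegrable [SFinite μ] (h : HasAutocovariance μ Y γ)
    (hY : StronglyMeasurable (uncurry Y)) (hY₂ : ∀ s, MemLp (Y s) 2 μ) (a b : ℝ) :
    IntervalIntegrable γ volume a b := by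
  rw [intervalIntegrable_iff]
  exact IntegrableOn.of_bound measure_Ioc_lt_top (h.measurable hY).aestronglyMeasurable (γ 0)
    (.of_forall fun x => h.abs_le hY₂ x)

theorem integral_mul_sub (h : HasAutocovariance μ Y γ) (hY₂ : ∀ s, MemLp (Y s) 2 μ)
    (a c d : ℝ) : ∫ ω, Y a ω * (Y c ω - Y d ω) ∂μ = γ (a - c) - γ (a - d) := by
  have hi : ∀ x, Integrable (fun ω => Y a ω * Y x ω) μ :=
    fun x => (hY₂ a).integrable_mul (hY₂ x)
  simp_rw [mul_sub]
  rw [integral_sub (hi c) (hi d), h, h]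

theorem integral_sub_mul_sub (h : HasAutocovariance μ Y γ) (hY₂ : ∀ s, MemLp (Y s) 2 μ)
    (a b c d : ℝ) :
    ∫ ω, (Y a ω - Y b ω) * (Y c ω - Y d ω) ∂μ =
      γ (a - c) - γ (a - d) - γ (b - c) + γ (b - d) := by
  have hi : ∀ x, Integrable (fun ω => Y x ω * (Y c ω - Y d ω)) μ :=
    fun x => (hY₂ x).integrable_mul ((hY₂ c).sub (hY₂ d))
  simp_rw [sub_mul (Y a _)]
  rw [integral_sub (hi a) (hi b), h.integral_mul_sub hY₂, h.integral_mul_sub hY₂]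
  ring

section Windows

variable [IsFiniteMeasure μ] {a b c d : ℝ}

theorem integrable_intervalIntegral_mul_sub (h : HasAutocovariance μ Y γ)
    (hY : StronglyMeasurable (uncurry Y)) (hYm : ∀ s, Measurable (Y s))
    (hY₂ : ∀ s, MemLp (Y s) 2 μ) (hab : a ≤ b) :
    Integrable (fun ω => (∫ s in a..b, Y s ω) * (Y c ω - Y d ω)) μ := by
  simp_rw [intervalIntegral.integral_of_le hab]
  exact integrable_integral_mul_of_integral_sq_le (Z := fun ω => Y c ω - Y d ω) hY hY₂
    (fun s => (h.integral_sq s).le) ((hYm c).sub (hYm d)).stronglyMeasurable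
    ((hY₂ c).sub (hY₂ d))

theorem integral_intervalIntegral_mul_sub (h : HasAutocovariance μ Y γ)
    (hY : StronglyMeasurable (uncurry Y)) (hYm : ∀ s, Measurable (Y s))
    (hY₂ : ∀ s, MemLp (Y s) 2 μ) (hab : a ≤ b) :
    ∫ ω, (∫ s in a..b, Y s ω) * (Y c ω - Y d ω) ∂μ = ∫ s in a..b, (γ (s - c) - γ (s - d)) := by
  simp_rw [intervalIntegral.integral_of_le hab]
  rw [integral_integral_mul_of_integral_sq_le (Z := fun ω => Y c ω - Y d ω) hY hY₂
    (fun s => (h.integral_sq s).le) ((hYm c).sub (hYm d)).stronglyMeasurable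
    ((hY₂ c).sub (hY₂ d))]
  simp_rw [h.integral_mul_sub hY₂]

theorem integrable_intervalIntegral_mul_intervalIntegral (h : HasAutocovariance μ Y γ)
    (hY : StronglyMeasurable (uncurry Y)) (hY₂ : ∀ s, MemLp (Y s) 2 μ) (hab : a ≤ b)
    (hcd : c ≤ d) :
    Integrable (fun ω => (∫ s in a..b, Y s ω) * ∫ u in c..d, Y u ω) μ := by
  simp_rw [intervalIntegral.integral_of_le hab, intervalIntegral.integral_of_le hcd]
  exact integrable_integral_mul_integral_of_integral_sq_le hY hY₂ fun s => (h.integral_sq s).le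

theorem integral_intervalIntegral_mul_intervalIntegral (h : HasAutocovariance μ Y γ)
    (hY : StronglyMeasurable (uncurry Y)) (hY₂ : ∀ s, MemLp (Y s) 2 μ) (hab : a ≤ b)
    (hcd : c ≤ d) :
    ∫ ω, (∫ s in a..b, Y s ω) * (∫ u in c..d, Y u ω) ∂μ =
      ∫ s in a..b, ∫ u in c..d, γ (s - u) := by
  simp_rw [intervalIntegral.integral_of_le hab, intervalIntegral.integral_of_le hcd]
  rw [integral_integral_mul_integral_of_integral_sq_le hY hY₂ fun s => (h.integral_sq s).le]
  simp only [h _ _]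

end Windows

theorem integral_cross_terms_eq_zero (h : HasAutocovariance μ Y γ) (t δ : ℝ) :
    (∫ s in (t - δ)..t, (γ s - γ (s + δ))) + ∫ u in (-δ)..0, (γ (u - t) - γ (u - (t - δ))) = 0 := by
  have hshift : ∫ u in (-δ)..0, (γ (u - t) - γ (u - (t - δ))) =
      ∫ u in (-δ)..0, (fun s => γ (s + δ) - γ s) (t - δ - u) :=
    intervalIntegral.integral_congr fun u _ => by
      simp only [h.comm u t, h.comm u (t - δ), sub_right_comm t δ u, sub_add_cancel]
  have hneg : ∫ s in (t - δ)..t, (γ s - γ (s + δ)) = -∫ s in (t - δ)..t, (γ (s + δ) - γ s) := by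
    rw [← intervalIntegral.integral_neg]
    simp_rw [neg_sub]
  rw [hneg, hshift, intervalIntegral.integral_comp_sub_left (fun s => γ (s + δ) - γ s), sub_zero,
    sub_neg_eq_add, sub_add_cancel, neg_add_cancel]

end HasAutocovariance

end Autocovariance

noncomputable def langevinNoise (H : ℝ) (Y : ℝ → Ω → ℝ) (t : ℝ) (ω : Ω) : ℝ :=
  Y t ω - Y 0 ω + H * ∫ s in (0 : ℝ)..t, Y s ω

theorem langevinNoise_sub_langevinNoise {H : ℝ} {Y : ℝ → Ω → ℝ} {ω : Ω}
    (hY : Continuous fun s => Y s ω) (a b : ℝ) :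
    langevinNoise H Y b ω - langevinNoise H Y a ω = Y b ω - Y a ω + H * ∫ s in a..b, Y s ω := by
  rw [langevinNoise, langevinNoise, ← intervalIntegral.integral_interval_sub_left
    (hY.intervalIntegrable 0 b) (hY.intervalIntegrable 0 a)]
  ring

theorem HasAutocovariance.integral_langevinNoise_sub_mul_sub [MeasurableSpace Ω] {μ : Measure Ω}
    [IsFiniteMeasure μ] {Y : ℝ → Ω → ℝ} {γ : ℝ → ℝ} (h : HasAutocovariance μ Y γ)
    (hYm : ∀ s, Measurable (Y s)) (hYc : ∀ ω, Continuous fun s => Y s ω)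
    (hY₂ : ∀ s, MemLp (Y s) 2 μ) (H t : ℝ) {δ : ℝ} (hδ : 0 ≤ δ) :
    ∫ ω, (langevinNoise H Y t ω - langevinNoise H Y (t - δ) ω)
        * (langevinNoise H Y 0 ω - langevinNoise H Y (-δ) ω) ∂μ
      = 2 * γ t - γ (t + δ) - γ (t - δ)
        + H ^ 2 * ((∫ s in (t - δ)..t, (s - t + δ) * γ s)
            + ∫ s in t..(t + δ), (t - s + δ) * γ s) := by
  have hY : StronglyMeasurable (uncurry Y) :=
    stronglyMeasurable_uncurry_of_continuous_of_stronglyMeasurable hYc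
      fun s => (hYm s).stronglyMeasurable
  have hle₁ : t - δ ≤ t := by linarith
  have hle₂ : -δ ≤ 0 := by linarith
  simp_rw [langevinNoise_sub_langevinNoise (hYc _)]
  rw [integral_add_mul_add (A := fun ω => Y t ω - Y (t - δ) ω)
      (C := fun ω => Y 0 ω - Y (-δ) ω) H
      (((hY₂ _).sub (hY₂ _)).integrable_mul ((hY₂ _).sub (hY₂ _)))
      (h.integrable_intervalIntegral_mul_sub hY hYm hY₂ hle₁)
      (h.integrable_intervalIntegral_mul_sub hY hYm hY₂ hle₂)
      (h.integrable_intervalIntegral_mul_intervalIntegral hY hY₂ hle₁ hle₂),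
    h.integral_sub_mul_sub hY₂, h.integral_intervalIntegral_mul_sub hY hYm hY₂ hle₁,
    h.integral_intervalIntegral_mul_sub hY hYm hY₂ hle₂,
    h.integral_intervalIntegral_mul_intervalIntegral hY hY₂ hle₁ hle₂,
    intervalIntegral.integral_integral_comp_sub_eq_tent (h.intervalIntegrable hY hY₂)]
  simp only [sub_zero, sub_neg_eq_add, sub_add_cancel, h.integral_cross_terms_eq_zero]
  ring

theorem stmt17_general [MeasurableSpace Ω] (μ : Measure Ω) [IsProbabilityMeasure μ]
    (H : ℝ)
    (X : ℝ → Ω → ℝ)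
    (hmX : ∀ t, Measurable (X t))
    (hpaths : ∀ᵐ ω ∂μ, Continuous fun s => X s ω)
    (hX : IsStationaryR1 μ X)
    (hL2X : ∀ t : ℝ, MemLp (X t) 2 μ)
    (γ : ℝ → ℝ)
    (hγ : ∀ t : ℝ, γ t = ∫ ω, X t ω * X 0 ω ∂μ)
    (G : ℝ → Ω → ℝ)
    (hG : ∀ (t : ℝ) (ω : Ω), G t ω = X t ω - X 0 ω + H * ∫ s in (0 : ℝ)..t, X s ω)
    (r : ℝ → ℝ → ℝ)
    (hr : ∀ (δ t : ℝ), r δ t =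
      ∫ ω, (G t ω - G (t - δ) ω) * (G 0 ω - G (-δ) ω) ∂μ) :
    ∀ (t δ : ℝ), 0 < δ →
      r δ t = 2 * γ t - γ (t + δ) - γ (t - δ)
        + H ^ 2 * ((∫ s in (t - δ)..t, (s - t + δ) * γ s)
            + ∫ s in t..(t + δ), (t - s + δ) * γ s) := by
  intro t δ hδ
  obtain ⟨Y, hYm, hYc, hYX⟩ := exists_continuous_modification hmX hpaths
  have hYX' : ∀ s, Y s =ᵐ[μ] X s := fun s => hYX.mono fun ω h => h s
  have hcov : HasAutocovariance μ Y γ := (hX.hasAutocovariance hmX hγ).congr_ae hYX'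
  have hGY : ∀ᵐ ω ∂μ, ∀ s, G s ω = langevinNoise H Y s ω :=
    hYX.mono fun ω h s => by simp only [hG, langevinNoise, h]
  rw [hr, ← hcov.integral_langevinNoise_sub_mul_sub hYm hYc
    (fun s => (hL2X s).ae_eq (hYX' s).symm) H t hδ.le]
  exact integral_congr_ae (hGY.mono fun ω h => by simp only [h])

/-- in the univariate case (`H > 0` a real number), the noise
`G_t = X_t − X_0 + H ∫_0^t X_s ds` of a centred square-integrable strictly
stationary process `X` with a.s. continuous paths satisfies, for all `t ∈ ℝ`
and `δ > 0`,
`r_δ(t) = 2γ(t) − γ(t+δ) − γ(t−δ) + H² (∫_{t−δ}^t (s−t+δ)γ(s)ds + ∫_t^{t+δ} (t−s+δ)γ(s)ds)`;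
in particular the first-order terms in `H` vanish. -/
theorem stmt17 [MeasurableSpace Ω] (μ : Measure Ω) [IsProbabilityMeasure μ]
    (H : ℝ) (hH : 0 < H)
    (X : ℝ → Ω → ℝ)
    (hmX : ∀ t, Measurable (X t))
    (hpaths : ∀ᵐ ω ∂μ, Continuous fun s => X s ω)
    (hX : IsStationaryR1 μ X)
    (hcent : ∀ t : ℝ, ∫ ω, X t ω ∂μ = 0)
    (hL2X : ∀ t : ℝ, MemLp (X t) 2 μ)
    (γ : ℝ → ℝ)
    (hγ : ∀ t : ℝ, γ t = ∫ ω, X t ω * X 0 ω ∂μ)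
    (G : ℝ → Ω → ℝ)
    (hG : ∀ (t : ℝ) (ω : Ω), G t ω = X t ω - X 0 ω + H * ∫ s in (0 : ℝ)..t, X s ω)
    (r : ℝ → ℝ → ℝ)
    (hr : ∀ (δ t : ℝ), r δ t =
      ∫ ω, (G t ω - G (t - δ) ω) * (G 0 ω - G (-δ) ω) ∂μ) :
    ∀ (t δ : ℝ), 0 < δ →
      r δ t = 2 * γ t - γ (t + δ) - γ (t - δ)
        + H ^ 2 * ((∫ s in (t - δ)..t, (s - t + δ) * γ s)
            + ∫ s in t..(t + δ), (t - s + δ) * γ s) :=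
  stmt17_general μ H X hmX hpaths hX hL2X γ hγ G hG r hr
end
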